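/- arXiv:1602.06902 — 2 statements merged into one kernel-verified Lean document; each statement's English description precedes it below -/
import Mathlib

section
/- Let Q_{AB} be a pmf on a finite set A × B with strictly positive minimum μ = min{Q_{AB}(a,b) : (a,b) ∈ supp(Q_{AB})}, and let δ > 0. If A^n ~ Q_A^{⊗n} and B^n ~ Q_B^{⊗n} are independent, then the probability that (A^n, B^n) is jointly δ-strongly letter-typical for Q_{AB} is at most 2^{−n(I(A;B) − 2δ log₂(|A||B|))}, where I(A;B) is the mutual information of Q_{AB}. -/
/-! For a typical pair `(aⁿ, bⁿ)` every letter has positive probability, and with the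
information density `ι = log₂ (Q / (Q_A Q_B))` we get
`Q_A^n(aⁿ) Q_B^n(bⁿ) = Q^n(aⁿ, bⁿ) 2^(-∑ₜ ι(aₜ, bₜ))` and `∑ₜ ι(aₜ, bₜ) = ∑_z N(z) ι(z)`.
Replacing the counts `N(z)` by `n Q(z)` costs at most `n δ ∑ Q |ι|`. Since `Q ≤ Q_A, Q_B ≤ 1`
we have `|ι| ≤ -log₂ Q`, so `∑ Q |ι| ≤ H(Q) ≤ log₂ (|A||B|)`. Summing
`Q_A^n Q_B^n ≤ Q^n 2^(-n (I - δ log₂ (|A||B|)))` over the typical set and using `∑ Q^n = 1`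
gives the bound. -/

open Finset Real

def IsStronglyTypical {Z : Type*} [DecidableEq Z] {n : ℕ} (p : Z → ℝ) (δ : ℝ)
    (x : Fin n → Z) : Prop :=
  ∀ z, |(#{i | x i = z} : ℝ) / n - p z| ≤ δ * p z ∧ (p z = 0 → #{i | x i = z} = 0)

theorem Finset.sum_comp_eq_sum_card_nsmul {ι Z M : Type*} [Fintype ι] [Fintype Z]
    [DecidableEq Z] [AddCommMonoid M] (f : Z → M) (g : ι → Z) :
    ∑ i, f (g i) = ∑ z, #{i | g i = z} • f z := by
  rw [← sum_fiberwise univ g]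
  refine sum_congr rfl fun z _ => ?_
  rw [sum_congr rfl fun i hi => congrArg f (mem_filter.mp hi).2, sum_const]

theorem sum_negMulLog_le_log_card {X : Type*} [Fintype X] {p : X → ℝ} (h0 : ∀ x, 0 ≤ p x)
    (h1 : ∑ x, p x = 1) : ∑ x, negMulLog (p x) ≤ log (Fintype.card X) := by
  have hX : (0 : ℝ) < Fintype.card X := by
    have : Nonempty X := by
      by_contra h
      simp [not_nonempty_iff.mp h] at h1
    exact_mod_cast Fintype.card_pos
  have hw : ∑ _x : X, (Fintype.card X : ℝ)⁻¹ = 1 := by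
    simp [card_univ, hX.ne']
  -- Jensen for the concave `negMulLog` with uniform weights
  have jensen := concaveOn_negMulLog.le_map_sum (t := univ)
    (fun _ _ => inv_nonneg.mpr hX.le) hw (fun x _ => Set.mem_Ici.mpr (h0 x))
  have hN : negMulLog (Fintype.card X : ℝ)⁻¹ =
      (Fintype.card X : ℝ)⁻¹ * log (Fintype.card X) := by
    simp [negMulLog, log_inv]
  simp only [smul_eq_mul, ← mul_sum, h1, mul_one, hN] at jensen
  exact le_of_mul_le_mul_left jensen (inv_pos.mpr hX)

theorem abs_log_div_mul_le_neg_log {q a b : ℝ} (hq : 0 < q) (hqa : q ≤ a) (ha : a ≤ 1)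
    (hqb : q ≤ b) (hb : b ≤ 1) : |log (q / (a * b))| ≤ -log q := by
  have ha0 : 0 < a := hq.trans_le hqa
  have hb0 : 0 < b := hq.trans_le hqb
  rw [log_div hq.ne' (by positivity), log_mul ha0.ne' hb0.ne', abs_le]
  have := log_le_log hq hqa
  have := log_le_log hq hqb
  have := log_nonpos ha0.le ha
  have := log_nonpos hb0.le hb
  constructor <;> linarith

theorem prod_eq_prod_mul_rpow_neg_sum_logb {ι : Type*} (s : Finset ι) {f g : ι → ℝ}
    (hf : ∀ i ∈ s, 0 < f i) (hg : ∀ i ∈ s, 0 < g i) :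
    ∏ i ∈ s, g i = (∏ i ∈ s, f i) * 2 ^ (-∑ i ∈ s, logb 2 (f i / g i)) := by
  rw [← sum_neg_distrib, rpow_sum_of_pos two_pos, ← prod_mul_distrib]
  refine prod_congr rfl fun i hi => ?_
  rw [rpow_neg zero_le_two, rpow_logb two_pos (by norm_num) (div_pos (hf i hi) (hg i hi)),
    inv_div, mul_div_cancel₀ _ (hf i hi).ne']

section Typical

variable {Z : Type*} [DecidableEq Z] {n : ℕ} {p : Z → ℝ} {δ : ℝ} {x : Fin n → Z}

theorem IsStronglyTypical.abs_card_sub_le (hx : IsStronglyTypical p δ x) (z : Z) :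
    |(#{i | x i = z} : ℝ) - n * p z| ≤ n * (δ * p z) := by
  rcases n.eq_zero_or_pos with rfl | hn
  · simp
  have hn : (0 : ℝ) < n := by exact_mod_cast hn
  calc |(#{i | x i = z} : ℝ) - n * p z| = n * |(#{i | x i = z} : ℝ) / n - p z| := by
        rw [← abs_of_pos hn, ← abs_mul, abs_of_pos hn, mul_sub, mul_div_cancel₀ _ hn.ne']
    _ ≤ n * (δ * p z) := mul_le_mul_of_nonneg_left (hx z).1 hn.le

theorem IsStronglyTypical.pos (hp : ∀ z, 0 ≤ p z) (hx : IsStronglyTypical p δ x) (i : Fin n) :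
    0 < p (x i) := by
  refine (hp _).lt_of_ne' fun h => ?_
  have := (hx _).2 h
  rw [card_eq_zero, filter_eq_empty_iff] at this
  exact this (mem_univ i) rfl

theorem IsStronglyTypical.sum_ge [Fintype Z] (hx : IsStronglyTypical p δ x) (r : Z → ℝ) :
    n * ∑ z, p z * r z - n * δ * ∑ z, p z * |r z| ≤ ∑ i, r (x i) := by
  rw [Finset.sum_comp_eq_sum_card_nsmul, mul_sum, mul_sum,
    ← sum_sub_distrib]
  refine sum_le_sum fun z _ => ?_
  have hdev : |((#{i | x i = z} : ℝ) - n * p z) * r z| ≤ n * (δ * p z) * |r z| := by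
    rw [abs_mul]
    exact mul_le_mul_of_nonneg_right (hx.abs_card_sub_le z) (abs_nonneg _)
  rw [nsmul_eq_mul]
  linarith [neg_abs_le (((#{i | x i = z} : ℝ) - n * p z) * r z)]

theorem IsStronglyTypical.prod_le [Fintype Z] {q : Z → ℝ} (hp : ∀ z, 0 ≤ p z)
    (hq : ∀ z, 0 < p z → 0 < q z) (hx : IsStronglyTypical p δ x) :
    ∏ i, q (x i) ≤ (∏ i, p (x i)) *
      2 ^ (-(n : ℝ) * (∑ z, p z * logb 2 (p z / q z) - δ * ∑ z, p z * |logb 2 (p z / q z)|)) := by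
  rw [prod_eq_prod_mul_rpow_neg_sum_logb univ (fun i _ => hx.pos hp i)
    (fun i _ => hq _ (hx.pos hp i))]
  have := hx.sum_ge (fun z => logb 2 (p z / q z))
  exact mul_le_mul_of_nonneg_left (rpow_le_rpow_of_exponent_le one_le_two (by linarith))
    (prod_nonneg fun i _ => hp _)

end Typical

section Marginals

variable {A B : Type*} {Q : A × B → ℝ}

theorem le_sum_snd [Fintype B] (hQ0 : ∀ z, 0 ≤ Q z) (a : A) (b : B) :
    Q (a, b) ≤ ∑ b', Q (a, b') :=
  single_le_sum (fun b' _ => hQ0 (a, b')) (mem_univ b)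

theorem le_sum_fst [Fintype A] (hQ0 : ∀ z, 0 ≤ Q z) (a : A) (b : B) :
    Q (a, b) ≤ ∑ a', Q (a', b) :=
  single_le_sum (fun a' _ => hQ0 (a', b)) (mem_univ a)

theorem sum_snd_le_one [Fintype A] [Fintype B] (hQ0 : ∀ z, 0 ≤ Q z) (hQ1 : ∑ z, Q z = 1)
    (a : A) : ∑ b, Q (a, b) ≤ 1 := by
  rw [← hQ1, Fintype.sum_prod_type]
  exact single_le_sum (f := fun a => ∑ b, Q (a, b))
    (fun a _ => sum_nonneg fun b _ => hQ0 (a, b)) (mem_univ a)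

theorem sum_fst_le_one [Fintype A] [Fintype B] (hQ0 : ∀ z, 0 ≤ Q z) (hQ1 : ∑ z, Q z = 1)
    (b : B) : ∑ a, Q (a, b) ≤ 1 := by
  rw [← hQ1, Fintype.sum_prod_type_right]
  exact single_le_sum (f := fun b => ∑ a, Q (a, b))
    (fun b _ => sum_nonneg fun a _ => hQ0 (a, b)) (mem_univ b)

theorem sum_mul_abs_logb_div_marginals_le [Fintype A] [Fintype B] (hQ0 : ∀ z, 0 ≤ Q z)
    (hQ1 : ∑ z, Q z = 1) {QA : A → ℝ} (hQA : ∀ a, QA a = ∑ b, Q (a, b))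
    {QB : B → ℝ} (hQB : ∀ b, QB b = ∑ a, Q (a, b)) :
    ∑ z, Q z * |logb 2 (Q z / (QA z.1 * QB z.2))| ≤
      logb 2 (Fintype.card A * Fintype.card B) := by
  have hterm : ∀ z, Q z * |logb 2 (Q z / (QA z.1 * QB z.2))| ≤ negMulLog (Q z) / log 2 := by
    rintro ⟨a, b⟩
    rcases (hQ0 (a, b)).eq_or_lt with h | h
    · simp [← h]
    simp only [logb, abs_div, abs_of_pos (log_pos one_lt_two), mul_div_assoc', negMulLog,
      neg_mul, ← mul_neg]
    gcongr
    refine abs_log_div_mul_le_neg_log h ?_ ?_ ?_ ?_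
    · exact (hQA a).symm ▸ le_sum_snd hQ0 a b
    · exact (hQA a).symm ▸ sum_snd_le_one hQ0 hQ1 a
    · exact (hQB b).symm ▸ le_sum_fst hQ0 a b
    · exact (hQB b).symm ▸ sum_fst_le_one hQ0 hQ1 b
  calc ∑ z, Q z * |logb 2 (Q z / (QA z.1 * QB z.2))| ≤ (∑ z, negMulLog (Q z)) / log 2 := by
        rw [sum_div]; exact sum_le_sum fun z _ => hterm z
    _ ≤ log (Fintype.card (A × B)) / log 2 := by
        gcongr; exact sum_negMulLog_le_log_card hQ0 hQ1
    _ = logb 2 (Fintype.card A * Fintype.card B) := by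
        rw [Fintype.card_prod, Nat.cast_mul, logb]

theorem IsStronglyTypical.prod_marginals_le [Fintype A] [Fintype B] [DecidableEq A]
    [DecidableEq B] (hQ0 : ∀ z, 0 ≤ Q z) (hQ1 : ∑ z, Q z = 1)
    {QA : A → ℝ} (hQA : ∀ a, QA a = ∑ b, Q (a, b))
    {QB : B → ℝ} (hQB : ∀ b, QB b = ∑ a, Q (a, b)) {δ : ℝ} (hδ : 0 ≤ δ) {n : ℕ}
    {a : Fin n → A} {b : Fin n → B} (hab : IsStronglyTypical Q δ fun i => (a i, b i)) :
    (∏ i, QA (a i)) * ∏ i, QB (b i) ≤ (∏ i, Q (a i, b i)) *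
      2 ^ (-(n : ℝ) * (∑ z, Q z * logb 2 (Q z / (QA z.1 * QB z.2)) -
        δ * logb 2 (Fintype.card A * Fintype.card B))) := by
  have hmarg : ∀ z, 0 < Q z → 0 < QA z.1 * QB z.2 := fun ⟨a, b⟩ h =>
    mul_pos (h.trans_le ((hQA a).symm ▸ le_sum_snd hQ0 a b))
      (h.trans_le ((hQB b).symm ▸ le_sum_fst hQ0 a b))
  rw [← prod_mul_distrib]
  refine (hab.prod_le hQ0 hmarg).trans (mul_le_mul_of_nonneg_left
    (rpow_le_rpow_of_exponent_le one_le_two ?_) (prod_nonneg fun i _ => hQ0 _))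
  have := mul_le_mul_of_nonneg_left
    (sum_mul_abs_logb_div_marginals_le hQ0 hQ1 hQA hQB) (mul_nonneg n.cast_nonneg hδ)
  nlinarith

theorem sum_prod_apply_pair_eq_one [Fintype A] [Fintype B] (hQ1 : ∑ z, Q z = 1) (n : ℕ) :
    ∑ w : (Fin n → A) × (Fin n → B), ∏ i, Q (w.1 i, w.2 i) = 1 := by
  rw [← Fintype.sum_equiv (Equiv.arrowProdEquivProdArrow (Fin n) (fun _ => A) (fun _ => B))
    (fun x => ∏ i, Q (x i)) _ fun x => rfl, ← Fintype.sum_pow, hQ1, one_pow]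

end Marginals

theorem stmt12_general {A B : Type*} [Fintype A] [Fintype B] [DecidableEq A] [DecidableEq B]
    (Q : A × B → ℝ) (hQ0 : ∀ z, 0 ≤ Q z) (hQ1 : ∑ z : A × B, Q z = 1)
    (QA : A → ℝ) (hQA : ∀ a, QA a = ∑ b, Q (a, b))
    (QB : B → ℝ) (hQB : ∀ b, QB b = ∑ a, Q (a, b))
    (I : ℝ) (hI : I = ∑ z : A × B,
      (if Q z = 0 then 0 else Q z * Real.logb 2 (Q z / (QA z.1 * QB z.2))))
    (δ : ℝ) (hδ : 0 < δ) (n : ℕ) :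
    ∑ w ∈ (univ : Finset ((Fin n → A) × (Fin n → B))).filter (fun w =>
        ∀ z : A × B,
          |((univ.filter (fun i : Fin n => (w.1 i, w.2 i) = z)).card : ℝ) / n - Q z|
              ≤ δ * Q z ∧
          (Q z = 0 → (univ.filter (fun i : Fin n => (w.1 i, w.2 i) = z)).card = 0)),
        (∏ i : Fin n, QA (w.1 i)) * ∏ i : Fin n, QB (w.2 i)
      ≤ (2 : ℝ) ^ (-(n : ℝ) * (I - 2 * δ * Real.logb 2 (Fintype.card A * Fintype.card B))) := by
  have hIr : I = ∑ z, Q z * logb 2 (Q z / (QA z.1 * QB z.2)) :=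
    hI.trans (sum_congr rfl fun z _ => by split_ifs with h <;> simp [h])
  have hL : 0 ≤ logb 2 (Fintype.card A * Fintype.card B) := by
    rw [← Nat.cast_mul]
    exact div_nonneg (log_natCast_nonneg _) (log_nonneg one_le_two)
  set L := logb 2 (Fintype.card A * Fintype.card B)
  have hbound : ∀ w : (Fin n → A) × (Fin n → B), IsStronglyTypical Q δ (fun i => (w.1 i, w.2 i)) →
      (∏ i, QA (w.1 i)) * ∏ i, QB (w.2 i) ≤
        (∏ i, Q (w.1 i, w.2 i)) * 2 ^ (-(n : ℝ) * (I - 2 * δ * L)) := fun w hw =>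
    (hw.prod_marginals_le hQ0 hQ1 hQA hQB hδ.le).trans <|
      mul_le_mul_of_nonneg_left (rpow_le_rpow_of_exponent_le one_le_two <| by
          rw [← hIr]; nlinarith [mul_nonneg (mul_nonneg n.cast_nonneg hδ.le) hL])
        (prod_nonneg fun i _ => hQ0 _)
  refine (sum_le_sum fun w hw => hbound w ?_).trans ?_
  · exact (mem_filter.mp hw).2
  rw [← sum_mul]
  refine mul_le_of_le_one_left (rpow_nonneg zero_le_two _) ?_
  exact (sum_le_sum_of_subset_of_nonneg (filter_subset _ _) fun w _ _ =>
    prod_nonneg fun i _ => hQ0 _).trans_eq (sum_prod_apply_pair_eq_one hQ1 n)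

theorem stmt12 {A B : Type*} [Fintype A] [Fintype B] [DecidableEq A] [DecidableEq B]
    (Q : A × B → ℝ) (hQ0 : ∀ z, 0 ≤ Q z) (hQ1 : ∑ z : A × B, Q z = 1)
    (QA : A → ℝ) (hQA : ∀ a, QA a = ∑ b, Q (a, b))
    (QB : B → ℝ) (hQB : ∀ b, QB b = ∑ a, Q (a, b))
    (μ : ℝ) (hμ0 : 0 < μ) (hμ : ∀ z : A × B, Q z ≠ 0 → μ ≤ Q z)
    (I : ℝ) (hI : I = ∑ z : A × B,
      (if Q z = 0 then 0 else Q z * Real.logb 2 (Q z / (QA z.1 * QB z.2))))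
    (δ : ℝ) (hδ : 0 < δ) (n : ℕ) :
    ∑ w ∈ (univ : Finset ((Fin n → A) × (Fin n → B))).filter (fun w =>
        ∀ z : A × B,
          |((univ.filter (fun i : Fin n => (w.1 i, w.2 i) = z)).card : ℝ) / n - Q z|
              ≤ δ * Q z ∧
          (Q z = 0 → (univ.filter (fun i : Fin n => (w.1 i, w.2 i) = z)).card = 0)),
        (∏ i : Fin n, QA (w.1 i)) * ∏ i : Fin n, QB (w.2 i)
      ≤ (2 : ℝ) ^ (-(n : ℝ) * (I - 2 * δ * Real.logb 2 (Fintype.card A * Fintype.card B))) :=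
  stmt12_general Q hQ0 hQ1 QA hQA QB hQB I hI δ hδ n
end

section
/- Let X₁, X₂, … be i.i.d. random variables taking values in a finite set X, each with entropy H(X) > 0 in bits. For every R with 0 < R < H(X), there exists a sequence of maps φ_n : X^n → {1,…,⌈2^{nR}⌉} such that V(pmf of φ_n(X^n), unif({1,…,⌈2^{nR}⌉})) → 0 as n → ∞. (Intrinsic randomness: below-entropy rates of near-uniform bits can be extracted deterministically from an i.i.d. source.) -/
/-
Fix δ > 0 with R < H - δ and call x ∈ Xⁿ typical when pⁿ(x) ≤ 2^(-n(H-δ)). Chebyshev's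
inequality for the sum of the i.i.d. informations -log₂ p(xᵢ), whose variance is n times that of
one of them, shows that atypical sequences have probability O(1/n). Listing Xⁿ in any order and
cutting the cumulative mass of the typical sequences into M = ⌈2^(nR)⌉ intervals of length 1/M,
each bin receives typical mass at most 1/M + 2^(-n(H-δ)). As all bin masses add up to 1, the L1
distance to the uniform law is at most 2·P(atypical) + 2M·2^(-n(H-δ)), and the second term is
at most 4·2^(-n(H-δ-R)) → 0.
-/

open Finset Filter Topology

section ProductWeights

variable {ι X : Type*} [Fintype ι] [DecidableEq ι] [Fintype X]

lemma sum_prod_mul_prod_eq_prod_sum (p : X → ℝ) (h : ι → X → ℝ) :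
    ∑ v : ι → X, (∏ i, p (v i)) * ∏ i, h i (v i) = ∏ i, ∑ x, p x * h i x := by
  simp only [← prod_mul_distrib]
  rw [prod_univ_sum, Fintype.piFinset_univ]

lemma sum_prod_eq_one {p : X → ℝ} (hp1 : ∑ x, p x = 1) :
    ∑ v : ι → X, ∏ i, p (v i) = 1 := by
  simpa [hp1] using sum_prod_mul_prod_eq_prod_sum (ι := ι) p (fun _ _ => 1)

lemma sum_prod_mul_mul_eq_ite {p g : X → ℝ} (hp1 : ∑ x, p x = 1) (hg : ∑ x, p x * g x = 0)
    (i j : ι) :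
    ∑ v : ι → X, (∏ k, p (v k)) * (g (v i) * g (v j)) =
      if i = j then ∑ x, p x * g x ^ 2 else 0 := by
  have h := sum_prod_mul_prod_eq_prod_sum p
    (fun k x => (if k = i then g x else 1) * (if k = j then g x else 1))
  simp only [prod_mul_distrib, prod_ite_eq', mem_univ, if_true] at h
  rw [h]
  split_ifs with hij
  · subst hij
    rw [prod_eq_single i]
    · simp [sq]
    · intro k _ hk
      simp [hk, hp1]
    · simp
  · refine prod_eq_zero (mem_univ i) ?_
    simpa [hij] using hg

lemma sum_prod_mul_sum_sq_eq {p g : X → ℝ} (hp1 : ∑ x, p x = 1) (hg : ∑ x, p x * g x = 0) :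
    ∑ v : ι → X, (∏ k, p (v k)) * (∑ i, g (v i)) ^ 2 =
      Fintype.card ι * ∑ x, p x * g x ^ 2 := by
  calc ∑ v : ι → X, (∏ k, p (v k)) * (∑ i, g (v i)) ^ 2
      = ∑ i, ∑ j, ∑ v : ι → X, (∏ k, p (v k)) * (g (v i) * g (v j)) := by
        simp only [sq, sum_mul_sum]
        simp only [mul_sum]
        rw [sum_comm]
        exact sum_congr rfl fun i _ => sum_comm
    _ = Fintype.card ι * ∑ x, p x * g x ^ 2 := by
        simp [sum_prod_mul_mul_eq_ite hp1 hg]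

end ProductWeights

lemma sum_filter_le_abs_le_div_sq {V : Type*} [Fintype V] {w : V → ℝ} (hw : ∀ v, 0 ≤ w v)
    (Y : V → ℝ) {t : ℝ} (ht : 0 < t) :
    ∑ v ∈ univ.filter (fun v => t ≤ |Y v|), w v ≤ (∑ v, w v * Y v ^ 2) / t ^ 2 := by
  rw [le_div_iff₀ (by positivity), sum_mul]
  calc ∑ v ∈ univ.filter (fun v => t ≤ |Y v|), w v * t ^ 2
      ≤ ∑ v ∈ univ.filter (fun v => t ≤ |Y v|), w v * Y v ^ 2 := by
        refine sum_le_sum fun v hv => mul_le_mul_of_nonneg_left ?_ (hw v)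
        rw [← sq_abs (Y v)]
        exact pow_le_pow_left₀ ht.le (mem_filter.mp hv).2 2
    _ ≤ ∑ v, w v * Y v ^ 2 :=
        sum_le_sum_of_subset_of_nonneg (filter_subset _ _)
          fun v _ _ => mul_nonneg (hw v) (sq_nonneg _)

lemma le_abs_sum_of_rpow_lt_prod {ι X : Type*} [Fintype ι] {p : X → ℝ} {H δ : ℝ}
    {v : ι → X} (hv : (2 : ℝ) ^ (-(Fintype.card ι * (H - δ))) < ∏ i, p (v i)) :
    Fintype.card ι * δ ≤ |∑ i, (-Real.logb 2 (p (v i)) - H)| := by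
  have hpos : 0 < ∏ i, p (v i) := (Real.rpow_pos_of_pos two_pos _).trans hv
  have hne : ∀ i ∈ univ, p (v i) ≠ 0 := fun i _ h => hpos.ne' (prod_eq_zero (mem_univ i) h)
  have hlog := Real.logb_lt_logb one_lt_two (Real.rpow_pos_of_pos two_pos _) hv
  rw [Real.logb_rpow two_pos (by norm_num), Real.logb_prod _ _ hne] at hlog
  rw [sum_sub_distrib, sum_neg_distrib, sum_const, card_univ, nsmul_eq_mul]
  exact le_abs.mpr (Or.inr (by linarith))

lemma sum_prod_filter_rpow_lt_prod_le {ι X : Type*} [Fintype ι] [DecidableEq ι] [Nonempty ι]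
    [Fintype X] {p : X → ℝ} (hp0 : ∀ x, 0 ≤ p x) (hp1 : ∑ x, p x = 1)
    {H : ℝ} (hH : H = -∑ x, p x * Real.logb 2 (p x)) {δ : ℝ} (hδ : 0 < δ) :
    ∑ v ∈ univ.filter
        (fun v : ι → X => (2 : ℝ) ^ (-(Fintype.card ι * (H - δ))) < ∏ i, p (v i)),
        ∏ i, p (v i) ≤
      (∑ x, p x * (-Real.logb 2 (p x) - H) ^ 2) / (δ ^ 2 * Fintype.card ι) := by
  have hg : ∑ x, p x * (-Real.logb 2 (p x) - H) = 0 := by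
    simp only [mul_sub, sum_sub_distrib, ← sum_mul, hp1, mul_neg, sum_neg_distrib, ← hH]
    ring
  have hn : (0 : ℝ) < Fintype.card ι := by exact_mod_cast Fintype.card_pos
  have hP0 : ∀ v : ι → X, 0 ≤ ∏ i, p (v i) := fun v => prod_nonneg fun i _ => hp0 (v i)
  calc _ ≤ ∑ v ∈ univ.filter (fun v : ι → X =>
          Fintype.card ι * δ ≤ |∑ i, (-Real.logb 2 (p (v i)) - H)|), ∏ i, p (v i) :=
        sum_le_sum_of_subset_of_nonneg
          (monotone_filter_right _ fun _ _ => le_abs_sum_of_rpow_lt_prod) fun v _ _ => hP0 v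
    _ ≤ (∑ v : ι → X, (∏ i, p (v i)) * (∑ i, (-Real.logb 2 (p (v i)) - H)) ^ 2) /
          (Fintype.card ι * δ) ^ 2 :=
        sum_filter_le_abs_le_div_sq hP0 _ (by positivity)
    _ = _ := by
        rw [sum_prod_mul_sum_sq_eq hp1 hg]
        field_simp

section Binning

variable {V : Type*} [Fintype V] [LinearOrder V] {r : V → ℝ}

lemma sum_le_of_forall_cumsum_mem (hr : ∀ v, 0 ≤ r v) {B : Finset V} {x y : ℝ} (hxy : x ≤ y)
    (hB : ∀ v ∈ B,
      x ≤ ∑ w ∈ univ.filter (· < v), r w ∧ ∑ w ∈ univ.filter (· ≤ v), r w ≤ y) :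
    ∑ v ∈ B, r v ≤ y - x := by
  rcases B.eq_empty_or_nonempty with rfl | hne
  · simpa using hxy
  set a := B.min' hne
  set m := B.max' hne
  have hsplit : ∑ w ∈ univ.filter (· ≤ m), r w =
      ∑ w ∈ univ.filter (· < a), r w +
        ∑ w ∈ univ.filter (fun w => a ≤ w ∧ w ≤ m), r w := by
    rw [← sum_filter_add_sum_filter_not (univ.filter (· ≤ m)) (· < a), filter_filter,
      filter_filter]
    congr 2 <;> ext w
    · have : a ≤ m := B.min'_le _ (B.max'_mem hne)
      simp only [mem_filter, mem_univ, true_and, and_iff_right_iff_imp]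
      intro hw
      exact (hw.trans_le this).le
    · simp [and_comm]
  calc ∑ v ∈ B, r v ≤ ∑ w ∈ univ.filter (fun w => a ≤ w ∧ w ≤ m), r w :=
        sum_le_sum_of_subset_of_nonneg
          (fun v hv => mem_filter.mpr ⟨mem_univ v, B.min'_le v hv, B.le_max' v hv⟩)
          fun v _ _ => hr v
    _ ≤ y - x := by
        linarith [(hB m (B.max'_mem hne)).2, (hB a (B.min'_mem hne)).1]

lemma exists_fin_sum_filter_le (hr0 : ∀ v, 0 ≤ r v) {β : ℝ} (hrβ : ∀ v, r v ≤ β)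
    (hβ : 0 ≤ β) (hr1 : ∑ v, r v ≤ 1) {M : ℕ} (hM : 0 < M) :
    ∃ φ : V → Fin M, ∀ k, ∑ v ∈ univ.filter (fun v => φ v = k), r v ≤ 1 / M + β := by
  set F : V → ℝ := fun v => ∑ w ∈ univ.filter (· < v), r w
  have hF : ∀ v, ∑ w ∈ univ.filter (· ≤ v), r w = F v + r v := by
    intro v
    have : univ.filter (· ≤ v) = insert v (univ.filter (· < v)) := by
      ext
      simp [le_iff_lt_or_eq, or_comm]
    rw [this, sum_insert (by simp), add_comm]
  have hM' : (0 : ℝ) < M := by exact_mod_cast hM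
  set φ : V → Fin M := fun v => ⟨min ⌊F v * M⌋₊ (M - 1), by omega⟩
  refine ⟨φ, fun k => ?_⟩
  have hxy : (k : ℝ) / M ≤ (k + 1) / M + β := by
    rw [add_div]
    linarith [one_div_pos.mpr hM']
  have key := sum_le_of_forall_cumsum_mem hr0 (B := univ.filter (fun v => φ v = k)) hxy ?_
  · calc _ ≤ ((k : ℝ) + 1) / M + β - k / M := key
      _ = 1 / M + β := by ring
  intro v hv
  have hk : min ⌊F v * M⌋₊ (M - 1) = k := by simpa [φ, Fin.ext_iff] using hv
  have hF0 : 0 ≤ F v * M := mul_nonneg (sum_nonneg fun w _ => hr0 w) hM'.le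
  constructor
  · rw [div_le_iff₀ hM']
    exact (Nat.le_floor_iff hF0).mp (hk ▸ min_le_left _ _)
  · rw [hF]
    rcases le_total ⌊F v * M⌋₊ (M - 1) with hle | hle
    · rw [min_eq_left hle] at hk
      have : F v * M < k + 1 := by rw [← hk]; exact Nat.lt_floor_add_one _
      have : F v < (k + 1) / M := by rwa [lt_div_iff₀ hM']
      linarith [hrβ v]
    · rw [min_eq_right hle] at hk
      have : ((k : ℕ) : ℝ) + 1 = M := by rw [← hk]; norm_cast; omega
      rw [this, div_self hM'.ne', ← hF]
      calc _ ≤ ∑ w, r w := sum_le_sum_of_subset_of_nonneg (subset_univ _) fun w _ _ => hr0 w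
        _ ≤ 1 + β := by linarith

end Binning

lemma abs_sub_le_of_le_of_le_add {Q T c β : ℝ} (hTQ : T ≤ Q) (hT : T ≤ c + β)
    (hβ : 0 ≤ β) :
    |Q - c| ≤ (Q - T) + (c - T) + 2 * β := by
  rw [abs_sub_le_iff]
  constructor <;> linarith

lemma exists_sum_abs_sub_le {V : Type*} [Fintype V] {q : V → ℝ} (hq0 : ∀ v, 0 ≤ q v)
    (hq1 : ∑ v, q v = 1) {β : ℝ} (hβ : 0 ≤ β) {M : ℕ} (hM : 0 < M) :
    ∃ φ : V → Fin M, ∑ k, |∑ v ∈ univ.filter (fun v => φ v = k), q v - 1 / M| ≤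
      2 * ∑ v ∈ univ.filter (fun v => β < q v), q v + 2 * M * β := by
  let _ : LinearOrder V := LinearOrder.lift' (Fintype.equivFin V) (Fintype.equivFin V).injective
  set r : V → ℝ := fun v => if q v ≤ β then q v else 0
  have hr0 : ∀ v, 0 ≤ r v := fun v => by dsimp only [r]; split_ifs <;> simp [hq0]
  have hrq : ∀ v, r v ≤ q v := fun v => by dsimp only [r]; split_ifs <;> simp [hq0]
  have hrβ : ∀ v, r v ≤ β := fun v => by dsimp only [r]; split_ifs <;> linarith
  have hqr : ∑ v, (q v - r v) = ∑ v ∈ univ.filter (fun v => β < q v), q v := by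
    rw [sum_filter]
    exact sum_congr rfl fun v _ => by dsimp only [r]; split_ifs <;> linarith
  obtain ⟨φ, hφ⟩ := exists_fin_sum_filter_le hr0 hrβ hβ
    ((sum_le_sum fun v _ => hrq v).trans hq1.le) hM
  refine ⟨φ, ?_⟩
  have hM' : (M : ℝ) ≠ 0 := by positivity
  calc _ ≤ ∑ k : Fin M, ((∑ v ∈ univ.filter (fun v => φ v = k), q v -
          ∑ v ∈ univ.filter (fun v => φ v = k), r v) +
          (1 / M - ∑ v ∈ univ.filter (fun v => φ v = k), r v) + 2 * β) :=
        sum_le_sum fun k _ => abs_sub_le_of_le_of_le_add (sum_le_sum fun v _ => hrq v) (hφ k) hβ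
    _ = 2 * ∑ v, (q v - r v) + 2 * M * β := by
        simp only [sum_add_distrib, sum_sub_distrib, sum_fiberwise, sum_const, card_univ,
          Fintype.card_fin, nsmul_eq_mul, hq1]
        field_simp
        ring
    _ = _ := by rw [hqr]

lemma tendsto_natCeil_two_rpow_mul_two_rpow_neg {a b : ℝ} (ha : 0 ≤ a) (hab : a < b) :
    Tendsto (fun n : ℕ => (⌈(2 : ℝ) ^ ((n : ℝ) * a)⌉₊ : ℝ) * 2 ^ (-((n : ℝ) * b)))
      atTop (𝓝 0) := by
  have hgeom : Tendsto (fun n : ℕ => 2 * ((2 : ℝ) ^ (a - b)) ^ n) atTop (𝓝 0) := by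
    simpa using (tendsto_pow_atTop_nhds_zero_of_lt_one (by positivity)
      (Real.rpow_lt_one_of_one_lt_of_neg one_lt_two (sub_neg.mpr hab))).const_mul 2
  refine squeeze_zero (fun n => by positivity) (fun n => ?_) hgeom
  have hceil : (⌈(2 : ℝ) ^ ((n : ℝ) * a)⌉₊ : ℝ) ≤ 2 * 2 ^ ((n : ℝ) * a) :=
    (Nat.ceil_lt_two_mul ((by norm_num : (2 : ℝ)⁻¹ < 1).trans_le
      (Real.one_le_rpow one_le_two (by positivity)))).le
  calc _ ≤ 2 * 2 ^ ((n : ℝ) * a) * (2 : ℝ) ^ (-((n : ℝ) * b)) := by gcongr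
    _ = 2 * ((2 : ℝ) ^ (a - b)) ^ n := by
        rw [mul_assoc, ← Real.rpow_add two_pos, ← Real.rpow_mul_natCast zero_le_two]
        ring_nf

theorem stmt18_general {X : Type*} [Fintype X]
    (p : X → ℝ) (hp0 : ∀ x, 0 ≤ p x) (hp1 : ∑ x, p x = 1)
    (H : ℝ) (hH : H = -∑ x : X, p x * Real.logb 2 (p x))
    (R : ℝ) (hR0 : 0 < R) (hRH : R < H) :
    ∃ φ : (n : ℕ) → (Fin n → X) → Fin ⌈(2 : ℝ) ^ ((n : ℝ) * R)⌉₊,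
      Filter.Tendsto
        (fun n : ℕ =>
          ∑ k : Fin ⌈(2 : ℝ) ^ ((n : ℝ) * R)⌉₊,
            |(∑ x ∈ (univ : Finset (Fin n → X)).filter (fun x => φ n x = k),
                ∏ i : Fin n, p (x i)) -
              1 / (⌈(2 : ℝ) ^ ((n : ℝ) * R)⌉₊ : ℝ)|)
        Filter.atTop (nhds 0) := by
  set δ := (H - R) / 2 with hδ_def
  have hδ : 0 < δ := half_pos (sub_pos.mpr hRH)
  choose φ hφ using fun n : ℕ => exists_sum_abs_sub_le (V := Fin n → X)
    (fun v => prod_nonneg fun i _ => hp0 (v i)) (sum_prod_eq_one hp1)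
    (β := (2 : ℝ) ^ (-((n : ℝ) * (H - δ)))) (by positivity)
    (M := ⌈(2 : ℝ) ^ ((n : ℝ) * R)⌉₊) (Nat.ceil_pos.mpr (by positivity))
  refine ⟨φ, squeeze_zero (fun n => by positivity) hφ ?_⟩
  have hatypical : Tendsto (fun n : ℕ => ∑ v ∈ univ.filter (fun v : Fin n → X =>
      (2 : ℝ) ^ (-((n : ℝ) * (H - δ))) < ∏ i, p (v i)), ∏ i, p (v i)) atTop (𝓝 0) := by
    refine squeeze_zero' (Eventually.of_forall fun n => sum_nonneg fun v _ =>
      prod_nonneg fun i _ => hp0 (v i)) ?_ (tendsto_const_div_atTop_nhds_zero_nat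
        ((∑ x, p x * (-Real.logb 2 (p x) - H) ^ 2) / δ ^ 2))
    filter_upwards [eventually_gt_atTop 0] with n hn
    have : Nonempty (Fin n) := ⟨⟨0, hn⟩⟩
    simpa [div_div] using sum_prod_filter_rpow_lt_prod_le (ι := Fin n) hp0 hp1 hH hδ
  have hMβ := tendsto_natCeil_two_rpow_mul_two_rpow_neg hR0.le (show R < H - δ by linarith)
  simpa [mul_assoc] using (hatypical.const_mul 2).add (hMβ.const_mul 2)

theorem stmt18 {X : Type*} [Fintype X] [DecidableEq X]
    (p : X → ℝ) (hp0 : ∀ x, 0 ≤ p x) (hp1 : ∑ x, p x = 1)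
    (H : ℝ) (hH : H = -∑ x : X, p x * Real.logb 2 (p x)) (hHpos : 0 < H)
    (R : ℝ) (hR0 : 0 < R) (hRH : R < H) :
    ∃ φ : (n : ℕ) → (Fin n → X) → Fin ⌈(2 : ℝ) ^ ((n : ℝ) * R)⌉₊,
      Filter.Tendsto
        (fun n : ℕ =>
          ∑ k : Fin ⌈(2 : ℝ) ^ ((n : ℝ) * R)⌉₊,
            |(∑ x ∈ (univ : Finset (Fin n → X)).filter (fun x => φ n x = k),
                ∏ i : Fin n, p (x i)) -
              1 / (⌈(2 : ℝ) ^ ((n : ℝ) * R)⌉₊ : ℝ)|)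
        Filter.atTop (nhds 0) :=
  stmt18_general p hp0 hp1 H hH R hR0 hRH
end
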